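/- Let L be a finite pm-algebra with 0 ≠ 1. Then L is subdirectly irreducible if and only if the prime filter space of L is φ-connected and moreover Body(L) has fewer than two elements or Body(L) = {P, φ(P)} for some prime filter P with φ(P) ≠ P. -/

import Mathlib

/-!
In a finite pm-algebra every prime filter is `Set.Ici p` for a join-irreducible `p`, and
congruences correspond, order-reversingly, to the *admissible* sets of prime filters: those closed
under `φ` and under passing to a maximal prime filter above. A congruence `θ` gives the prime
filters respecting it, an admissible set `A` gives "agreeing on every member of `A`".
Hence `L` is subdirectly irreducible iff there is a largest admissible set missing some prime
filter. If two admissible sets cover all prime filters, their congruences meet in equality; a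
φ-disconnection, or two different pairs `{P, φ P}` in the body, yield such a cover. Conversely,
in a φ-connected space an admissible set containing the body is empty or everything, since its
complement is increasing, decreasing and involutive (members of the complement are maximal or
minimal, and `φ` swaps these); so the monolith is `agree ∅` if the body is empty and
`agree (primes \ {P, φ P})` otherwise.
-/

/-- A pseudocomplemented De Morgan algebra (pm-algebra): a bounded distributive
lattice with a De Morgan involution `dm` and a pseudocomplement `pc`. -/
class PMAlgebra (L : Type*) extends DistribLattice L, BoundedOrder L where
  dm : L → L
  pc : L → L
  dm_dm : ∀ a : L, dm (dm a) = a
  dm_inf : ∀ a b : L, dm (a ⊓ b) = dm a ⊔ dm b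
  pc_iff : ∀ a b : L, a ⊓ b = ⊥ ↔ b ≤ pc a

namespace PMAlgebra

variable {L : Type*} [PMAlgebra L]

/-- A congruence of a pm-algebra. -/
def IsCongruence (θ : L → L → Prop) : Prop :=
  Equivalence θ ∧
  (∀ a b c d : L, θ a b → θ c d → θ (a ⊓ c) (b ⊓ d)) ∧
  (∀ a b c d : L, θ a b → θ c d → θ (a ⊔ c) (b ⊔ d)) ∧
  (∀ a b : L, θ a b → θ (dm a) (dm b)) ∧
  (∀ a b : L, θ a b → θ (pc a) (pc b))

/-- `L` is simple: it has more than one element and its only congruences are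
equality and the total relation. -/
def Simple (L : Type*) [PMAlgebra L] : Prop :=
  Nontrivial L ∧ ∀ θ : L → L → Prop, IsCongruence θ →
    θ = (fun a b => a = b) ∨ θ = (fun _ _ => True)

/-- `L` is subdirectly irreducible: there is a congruence `μ ≠ Eq` contained in
every congruence different from equality. -/
def SubdirectlyIrreducible (L : Type*) [PMAlgebra L] : Prop :=
  ∃ μ : L → L → Prop, IsCongruence μ ∧ μ ≠ (fun a b => a = b) ∧
    ∀ θ : L → L → Prop, IsCongruence θ → θ ≠ (fun a b => a = b) →
      ∀ a b : L, μ a b → θ a b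

/-- A prime filter of the underlying lattice of `L`. -/
def IsPrimeFilter (P : Set L) : Prop :=
  P.Nonempty ∧ P ≠ Set.univ ∧
  (∀ a b : L, a ∈ P → a ≤ b → b ∈ P) ∧
  (∀ a b : L, a ∈ P → b ∈ P → a ⊓ b ∈ P) ∧
  (∀ a b : L, a ⊔ b ∈ P → a ∈ P ∨ b ∈ P)

/-- The Birula–Rasiowa transformation. -/
def phi (P : Set L) : Set L := {a : L | dm a ∉ P}

/-- `P` is a maximal prime filter. -/
def IsMaximalPF (P : Set L) : Prop :=
  IsPrimeFilter P ∧ ∀ Q : Set L, IsPrimeFilter Q → P ⊆ Q → Q = P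

/-- `P` is a minimal prime filter. -/
def IsMinimalPF (P : Set L) : Prop :=
  IsPrimeFilter P ∧ ∀ Q : Set L, IsPrimeFilter Q → Q ⊆ P → Q = P

/-- The body of `L`: prime filters that are neither maximal nor minimal. -/
def body (L : Type*) [PMAlgebra L] : Set (Set L) :=
  {P : Set L | IsPrimeFilter P ∧ ¬ IsMaximalPF P ∧ ¬ IsMinimalPF P}

/-- The prime filter space of `L` is φ-connected. -/
def PhiConnected (L : Type*) [PMAlgebra L] : Prop :=
  ∀ S : Set (Set L), S ⊆ {P : Set L | IsPrimeFilter P} → S.Nonempty →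
    (∀ P Q : Set L, P ∈ S → IsPrimeFilter Q → P ⊆ Q → Q ∈ S) →
    (∀ P Q : Set L, P ∈ S → IsPrimeFilter Q → Q ⊆ P → Q ∈ S) →
    (∀ P : Set L, P ∈ S → phi P ∈ S) →
    S = {P : Set L | IsPrimeFilter P}

/-- The Kleene identity. -/
def Kleene (L : Type*) [PMAlgebra L] : Prop :=
  ∀ a b : L, a ⊓ dm a ≤ b ⊔ dm b

/-- The term `C(x) = (x ∧ x') ∨ (x ∧ x')*`. -/
def C (x : L) : L := (x ⊓ dm x) ⊔ pc (x ⊓ dm x)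

/-- The term `T(x) = C(x) ∧ C(x)'`. -/
def T (x : L) : L := C x ⊓ dm (C x)

end PMAlgebra

open PMAlgebra

namespace PMAlgebra

section Lattice

variable {α : Type*} [SemilatticeSup α] [OrderBot α] {a b p : α}

theorem le_of_forall_supIrred_le [WellFoundedLT α]
    (h : ∀ q, SupIrred q → q ≤ a → q ≤ b) : a ≤ b := by
  obtain ⟨s, rfl, hs⟩ := exists_supIrred_decomposition a
  exact Finset.sup_le fun q hq => h q (hs hq) (Finset.le_sup (f := id) hq)

theorem exists_supIrred_le [WellFoundedLT α] (ha : a ≠ ⊥) : ∃ q, SupIrred q ∧ q ≤ a := by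
  by_contra! h
  exact ha (le_bot_iff.mp (le_of_forall_supIrred_le fun q hq hqa => absurd hqa (h q hq)))

variable [Finite α]

/-- For sup-irreducible `p` this is the unique lower cover of `p`. -/
noncomputable def lowerCover (p : α) : α := (Set.toFinite (Set.Iio p)).toFinset.sup id

theorem le_lowerCover (h : a < p) : a ≤ lowerCover p :=
  Finset.le_sup (f := id) ((Set.toFinite _).mem_toFinset.mpr h)

theorem lowerCover_le : lowerCover p ≤ p :=
  Finset.sup_le fun _ hb => ((Set.toFinite _).mem_toFinset.mp hb).le

theorem SupIrred.lowerCover_lt (hp : SupIrred p) : lowerCover p < p := by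
  refine lowerCover_le.lt_of_ne fun h => ?_
  obtain ⟨q, hq, hqp⟩ := hp.finset_sup_eq h
  exact ((Set.toFinite _).mem_toFinset.mp hq).ne hqp

end Lattice

variable {L : Type*} [PMAlgebra L] {a b p : L} {P Q M : Set L} {A : Set (Set L)}

theorem dm_antitone (h : a ≤ b) : dm b ≤ dm a := by
  have := dm_inf a b
  rw [inf_eq_left.mpr h] at this
  rw [this]
  exact le_sup_right

theorem dm_sup (a b : L) : dm (a ⊔ b) = dm a ⊓ dm b := by
  rw [← dm_dm (dm a ⊓ dm b), dm_inf, dm_dm, dm_dm]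

theorem dm_top : dm (⊤ : L) = ⊥ :=
  le_bot_iff.mp (dm_dm (⊥ : L) ▸ dm_antitone le_top)

theorem dm_bot : dm (⊥ : L) = ⊤ := by
  rw [← dm_top, dm_dm]

theorem inf_pc_self (a : L) : a ⊓ pc a = ⊥ :=
  (pc_iff a (pc a)).mpr le_rfl

theorem pc_bot : pc (⊥ : L) = ⊤ :=
  top_le_iff.mp ((pc_iff ⊥ ⊤).mp (bot_inf_eq ⊤))

@[simp]
theorem mem_phi : a ∈ phi P ↔ dm a ∉ P := Iff.rfl

namespace IsPrimeFilter

theorem mem_of_le (hP : IsPrimeFilter P) (ha : a ∈ P) (hab : a ≤ b) : b ∈ P :=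
  hP.2.2.1 a b ha hab

theorem top_mem (hP : IsPrimeFilter P) : ⊤ ∈ P :=
  let ⟨_, ha⟩ := hP.1
  hP.mem_of_le ha le_top

theorem bot_notMem (hP : IsPrimeFilter P) : ⊥ ∉ P := fun h =>
  hP.2.1 (Set.eq_univ_of_forall fun _ => hP.mem_of_le h bot_le)

theorem inf_mem_iff (hP : IsPrimeFilter P) : a ⊓ b ∈ P ↔ a ∈ P ∧ b ∈ P :=
  ⟨fun h => ⟨hP.mem_of_le h inf_le_left, hP.mem_of_le h inf_le_right⟩,
    fun h => hP.2.2.2.1 a b h.1 h.2⟩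

theorem sup_mem_iff (hP : IsPrimeFilter P) : a ⊔ b ∈ P ↔ a ∈ P ∨ b ∈ P :=
  ⟨hP.2.2.2.2 a b, fun h => h.elim (hP.mem_of_le · le_sup_left) (hP.mem_of_le · le_sup_right)⟩

theorem phi (hP : IsPrimeFilter P) : IsPrimeFilter (phi P) := by
  have hbot : (⊥ : L) ∉ PMAlgebra.phi P := fun h => h (by rw [dm_bot]; exact hP.top_mem)
  refine ⟨⟨⊤, ?_⟩, fun h => hbot (h ▸ Set.mem_univ _), ?_, ?_, ?_⟩
  · exact fun h => hP.bot_notMem (by rwa [← dm_top])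
  · exact fun a b ha hab hb => ha (hP.mem_of_le hb (dm_antitone hab))
  · intro a b ha hb hab
    rw [dm_inf, hP.sup_mem_iff] at hab
    exact hab.elim ha hb
  · intro a b hab
    rw [mem_phi, dm_sup, hP.inf_mem_iff] at hab
    simpa only [mem_phi, ← not_and_or, not_not] using hab

end IsPrimeFilter

@[simp]
theorem phi_phi (P : Set L) : phi (phi P) = P := by
  ext a
  simp [phi, dm_dm]

theorem phi_subset_phi (h : P ⊆ Q) : phi Q ⊆ phi P :=
  fun _ ha hb => ha (h hb)

theorem IsMinimalPF.phi (hP : IsMinimalPF P) : IsMaximalPF (phi P) := by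
  refine ⟨hP.1.phi, fun Q hQ hPQ => ?_⟩
  rw [← hP.2 (PMAlgebra.phi Q) hQ.phi (by simpa using phi_subset_phi hPQ), phi_phi]

theorem IsMaximalPF.phi (hP : IsMaximalPF P) : IsMinimalPF (phi P) := by
  refine ⟨hP.1.phi, fun Q hQ hQP => ?_⟩
  rw [← hP.2 (PMAlgebra.phi Q) hQ.phi (by simpa using phi_subset_phi hQP), phi_phi]

theorem phi_mem_body (hP : P ∈ body L) : phi P ∈ body L :=
  ⟨hP.1.phi, fun h => hP.2.2 (phi_phi P ▸ h.phi), fun h => hP.2.1 (phi_phi P ▸ h.phi)⟩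

theorem pair_phi_eq_of_mem (h : Q ∈ ({P, phi P} : Set (Set L))) :
    ({Q, phi Q} : Set (Set L)) = {P, phi P} := by
  rcases h with rfl | rfl
  · rfl
  · rw [phi_phi, Set.pair_comm]

theorem SupIrred.isPrimeFilter_Ici (hp : SupIrred p) : IsPrimeFilter (Set.Ici p) :=
  ⟨⟨p, le_rfl⟩, fun h => hp.ne_bot (le_bot_iff.mp (h ▸ Set.mem_univ _ : ⊥ ∈ Set.Ici p)),
    fun _ _ ha hab => ha.trans hab, fun _ _ => le_inf, fun _ _ h => hp.supPrime.2 h⟩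

theorem IsPrimeFilter.exists_eq_Ici [WellFoundedLT L] (hP : IsPrimeFilter P) :
    ∃ p, SupIrred p ∧ P = Set.Ici p := by
  obtain ⟨p, hpP, hmin⟩ := wellFounded_lt.has_min P hP.1
  have hle : ∀ x ∈ P, p ≤ x := fun x hx => inf_eq_left.mp <|
    (inf_le_left.lt_or_eq.resolve_left (hmin _ (hP.inf_mem_iff.mpr ⟨hpP, hx⟩)))
  refine ⟨p, ⟨fun h => hP.bot_notMem (h.eq_bot ▸ hpP), fun b c hbc => ?_⟩,
    Set.ext fun x => ⟨hle x, hP.mem_of_le hpP⟩⟩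
  rcases hP.sup_mem_iff.mp (hbc ▸ hpP) with hb | hc
  · exact .inl (le_antisymm (hbc ▸ le_sup_left) (hle b hb))
  · exact .inr (le_antisymm (hbc ▸ le_sup_right) (hle c hc))

theorem le_of_forall_isPrimeFilter [WellFoundedLT L]
    (h : ∀ P, IsPrimeFilter P → a ∈ P → b ∈ P) : a ≤ b :=
  le_of_forall_supIrred_le fun _ hq hqa => h _ hq.isPrimeFilter_Ici hqa

theorem eq_of_forall_isPrimeFilter [WellFoundedLT L]
    (h : ∀ P, IsPrimeFilter P → (a ∈ P ↔ b ∈ P)) : a = b :=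
  le_antisymm (le_of_forall_isPrimeFilter fun P hP => (h P hP).1)
    (le_of_forall_isPrimeFilter fun P hP => (h P hP).2)

variable {θ : L → L → Prop} {c d : L}

namespace IsCongruence

theorem refl (hθ : IsCongruence θ) (a : L) : θ a a := hθ.1.refl a

theorem symm (hθ : IsCongruence θ) (h : θ a b) : θ b a := hθ.1.symm h

theorem trans (hθ : IsCongruence θ) (hab : θ a b) (hbc : θ b c) : θ a c := hθ.1.trans hab hbc

theorem inf (hθ : IsCongruence θ) (hab : θ a b) (hcd : θ c d) : θ (a ⊓ c) (b ⊓ d) :=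
  hθ.2.1 a b c d hab hcd

theorem sup (hθ : IsCongruence θ) (hab : θ a b) (hcd : θ c d) : θ (a ⊔ c) (b ⊔ d) :=
  hθ.2.2.1 a b c d hab hcd

theorem map_dm (hθ : IsCongruence θ) (h : θ a b) : θ (dm a) (dm b) := hθ.2.2.2.1 a b h

theorem map_pc (hθ : IsCongruence θ) (h : θ a b) : θ (pc a) (pc b) := hθ.2.2.2.2 a b h

theorem rel_of_le_of_le (hθ : IsCongruence θ) (hac : θ a c) (hab : a ≤ b) (hbc : b ≤ c) :
    θ a b := by
  simpa [inf_eq_right.mpr hab, inf_eq_left.mpr hbc] using hθ.inf (hθ.refl b) hac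

end IsCongruence

def agree (A : Set (Set L)) (a b : L) : Prop := ∀ P ∈ A, (a ∈ P ↔ b ∈ P)

def respecting (θ : L → L → Prop) : Set (Set L) :=
  {P | IsPrimeFilter P ∧ ∀ a b, θ a b → (a ∈ P ↔ b ∈ P)}

structure IsAdmissible (A : Set (Set L)) : Prop where
  isPrimeFilter : ∀ P ∈ A, IsPrimeFilter P
  phi_mem : ∀ P ∈ A, phi P ∈ A
  mem_of_subset : ∀ P ∈ A, ∀ M, IsMaximalPF M → P ⊆ M → M ∈ A

theorem isAdmissible_diff_pair (hP : P ∈ body L) :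
    IsAdmissible ({Q | IsPrimeFilter Q} \ {P, phi P}) where
  isPrimeFilter _ hQ := hQ.1
  phi_mem Q hQ := ⟨hQ.1.phi, fun h => hQ.2 (by simp [← pair_phi_eq_of_mem h])⟩
  mem_of_subset _ _ M hM _ := ⟨hM.1, by
    rintro (rfl | rfl)
    exacts [hP.2.1 hM, (phi_mem_body hP).2.1 hM]⟩

theorem PhiConnected.eq_empty_of_body_subset (hcon : PhiConnected L) (hA : IsAdmissible A)
    (hbody : body L ⊆ A) (hP : IsPrimeFilter P) (hPA : P ∉ A) : A = ∅ := by
  set B := {Q | IsPrimeFilter Q} \ A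
  have hext : ∀ Q ∈ B, IsMaximalPF Q ∨ IsMinimalPF Q := fun Q hQ => by
    by_contra! h
    exact hQ.2 (hbody ⟨hQ.1, h.1, h.2⟩)
  have hphi : ∀ Q ∈ B, phi Q ∈ B := fun Q hQ =>
    ⟨hQ.1.phi, fun h => hQ.2 (phi_phi Q ▸ hA.phi_mem _ h)⟩
  have hdown : ∀ Q R, Q ∈ B → IsPrimeFilter R → R ⊆ Q → R ∈ B := by
    intro Q R hQ hR hRQ
    rcases hext Q hQ with hmax | hmin
    · exact ⟨hR, fun h => hQ.2 (hA.mem_of_subset R h Q hmax hRQ)⟩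
    · rwa [hmin.2 R hR hRQ]
  have hup : ∀ Q R, Q ∈ B → IsPrimeFilter R → Q ⊆ R → R ∈ B := by
    intro Q R hQ hR hQR
    rcases hext Q hQ with hmax | hmin
    · rwa [hmax.2 R hR hQR]
    · simpa using hphi _ (hdown _ _ (hphi Q hQ) hR.phi (phi_subset_phi hQR))
  have hB := hcon B Set.sdiff_subset ⟨P, hP, hPA⟩ hup hdown hphi
  exact Set.eq_empty_of_forall_notMem fun Q hQ =>
    (hB ▸ hA.isPrimeFilter Q hQ : Q ∈ B).2 hQ

section Finite

variable [Finite L]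

theorem IsPrimeFilter.exists_isMaximalPF_superset (hP : IsPrimeFilter P) :
    ∃ M, IsMaximalPF M ∧ P ⊆ M := by
  obtain ⟨M, ⟨hM, hPM⟩, hmax⟩ :=
    (Set.toFinite {Q | IsPrimeFilter Q ∧ P ⊆ Q}).exists_maximalFor id _ ⟨P, hP, le_rfl⟩
  exact ⟨M, ⟨hM, fun Q hQ hMQ => le_antisymm (hmax ⟨hQ, hPM.trans hMQ⟩ hMQ) hMQ⟩, hPM⟩

theorem IsPrimeFilter.pc_mem_iff (hP : IsPrimeFilter P) :
    pc a ∈ P ↔ ∀ M, IsMaximalPF M → P ⊆ M → a ∉ M := by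
  refine ⟨fun hpc M hM hPM haM => hM.1.bot_notMem ?_, fun h => ?_⟩
  · exact inf_pc_self a ▸ hM.1.inf_mem_iff.mpr ⟨haM, hPM hpc⟩
  obtain ⟨p, -, rfl⟩ := hP.exists_eq_Ici
  by_contra hpc
  obtain ⟨q, hq, hqap⟩ := exists_supIrred_le fun h => hpc ((pc_iff a p).mp h)
  obtain ⟨M, hM, hqM⟩ := hq.isPrimeFilter_Ici.exists_isMaximalPF_superset
  exact h M hM (fun x hx => hqM ((hqap.trans inf_le_right).trans hx))
    (hqM (hqap.trans inf_le_left))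

theorem IsMaximalPF.pc_mem (hM : IsMaximalPF M) (ha : a ∉ M) : pc a ∈ M :=
  hM.1.pc_mem_iff.mpr fun M' hM' hMM' => by rwa [hM.2 M' hM'.1 hMM']

theorem IsPrimeFilter.mem_iff_lowerCover_mem (hQ : IsPrimeFilter Q) (hp : SupIrred p)
    (hne : Q ≠ Set.Ici p) : p ∈ Q ↔ lowerCover p ∈ Q := by
  obtain ⟨q, -, rfl⟩ := hQ.exists_eq_Ici
  refine ⟨fun hqp => le_lowerCover (hqp.lt_of_ne ?_), fun h => h.trans lowerCover_le⟩
  rintro rfl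
  exact hne rfl

theorem IsCongruence.exists_greatest (hθ : IsCongruence θ) (a : L) :
    ∃ m, θ a m ∧ ∀ b, θ a b → b ≤ m := by
  have hfin := Set.toFinite {b | θ a b}
  have hne : hfin.toFinset.Nonempty := ⟨a, hfin.mem_toFinset.mpr (hθ.refl a)⟩
  refine ⟨hfin.toFinset.sup' hne id, ?_,
    fun b hb => Finset.le_sup' id (hfin.mem_toFinset.mpr hb)⟩
  refine Finset.sup'_induction hne id (fun b hb c hc => ?_) fun b => hfin.mem_toFinset.mp
  simpa using hθ.sup hb hc

theorem IsAdmissible.isCongruence_agree (hA : IsAdmissible A) : IsCongruence (agree A) := by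
  refine ⟨⟨fun _ _ _ => Iff.rfl, fun h P hP => (h P hP).symm,
    fun h₁ h₂ P hP => (h₁ P hP).trans (h₂ P hP)⟩, ?_, ?_, ?_, ?_⟩
  · intro a b c d hab hcd P hP
    have hP' := hA.isPrimeFilter P hP
    rw [hP'.inf_mem_iff, hP'.inf_mem_iff, hab P hP, hcd P hP]
  · intro a b c d hab hcd P hP
    have hP' := hA.isPrimeFilter P hP
    rw [hP'.sup_mem_iff, hP'.sup_mem_iff, hab P hP, hcd P hP]
  · exact fun a b hab P hP => not_iff_not.mp (hab _ (hA.phi_mem P hP))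
  · intro a b hab P hP
    have hP' := hA.isPrimeFilter P hP
    rw [hP'.pc_mem_iff, hP'.pc_mem_iff]
    exact forall₃_congr fun M hM hPM => not_congr (hab M (hA.mem_of_subset P hP M hM hPM))

theorem agree_ne_eq (hA : ∀ Q ∈ A, IsPrimeFilter Q) (hP : IsPrimeFilter P) (hPA : P ∉ A) :
    agree A ≠ fun a b => a = b := by
  obtain ⟨p, hp, rfl⟩ := hP.exists_eq_Ici
  intro h
  have hagree : agree A p (lowerCover p) := fun Q hQ =>
    (hA Q hQ).mem_iff_lowerCover_mem hp fun hQp => hPA (hQp ▸ hQ)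
  rw [h] at hagree
  exact hp.lowerCover_lt.ne' hagree

theorem IsCongruence.mem_of_mem_respecting (hθ : IsCongruence θ) (hP : P ∈ respecting θ)
    (hM : IsMaximalPF M) (hPM : P ⊆ M) (hab : θ a b) (ha : a ∈ M) : b ∈ M := by
  by_contra hb
  -- `a ⊓ pc b` is `θ`-related to `⊥`, so its pseudocomplement lies in `P ⊆ M`, as does it.
  have hrel : θ (pc (a ⊓ pc b)) ⊤ := by
    simpa [inf_pc_self, pc_bot] using hθ.map_pc (hθ.inf hab (hθ.refl (pc b)))
  have hpcP : pc (a ⊓ pc b) ∈ P := (hP.2 _ _ hrel).mpr hP.1.top_mem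
  have hM' : a ⊓ pc b ∈ M := hM.1.inf_mem_iff.mpr ⟨ha, hM.pc_mem hb⟩
  exact hM.1.bot_notMem (inf_pc_self (a ⊓ pc b) ▸ hM.1.inf_mem_iff.mpr ⟨hM', hPM hpcP⟩)

theorem IsCongruence.isAdmissible_respecting (hθ : IsCongruence θ) :
    IsAdmissible (respecting θ) where
  isPrimeFilter _ hP := hP.1
  phi_mem _ hP := ⟨hP.1.phi, fun _ _ hab => not_congr (hP.2 _ _ (hθ.map_dm hab))⟩
  mem_of_subset _ hP _ hM hPM := ⟨hM.1, fun _ _ hab =>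
    ⟨hθ.mem_of_mem_respecting hP hM hPM hab,
      hθ.mem_of_mem_respecting hP hM hPM (hθ.symm hab)⟩⟩

theorem IsCongruence.rel_lowerCover (hθ : IsCongruence θ) (hp : SupIrred p)
    (hP : Set.Ici p ∉ respecting θ) : θ p (lowerCover p) := by
  have key : ∀ a b, θ a b → p ≤ a → ¬ p ≤ b → θ p (lowerCover p) := by
    intro a b hab hpa hpb
    have hlt : p ⊓ b ≤ lowerCover p :=
      le_lowerCover (inf_le_left.lt_of_ne fun h => hpb (h ▸ inf_le_right))
    simpa [inf_eq_left.mpr hpa, lowerCover_le, hlt] using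
      hθ.sup (hθ.inf (hθ.refl p) hab) (hθ.refl (lowerCover p))
  obtain ⟨a, b, hab, hne⟩ : ∃ a b, θ a b ∧ ¬(p ≤ a ↔ p ≤ b) := by
    by_contra! h
    exact hP ⟨hp.isPrimeFilter_Ici, h⟩
  by_cases hpa : p ≤ a
  · exact key a b hab hpa fun hpb => hne (iff_of_true hpa hpb)
  · exact key b a (hθ.symm hab) (not_not.mp fun hpb => hne (iff_of_false hpa hpb)) hpa

theorem IsCongruence.rel_sup_of_agree (hθ : IsCongruence θ) (h : agree (respecting θ) a b) :
    θ a (a ⊔ b) := by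
  obtain ⟨m, ham, hm⟩ := hθ.exists_greatest a
  have key : ∀ q, SupIrred q → q ≤ b → q ≤ m := by
    intro q
    induction q using WellFoundedLT.induction with
    | _ q ih =>
    intro hq hqb
    by_contra hqm
    have hq_resp : Set.Ici q ∉ respecting θ := fun hq' =>
      hqm (((h _ hq').2 hqb).trans (hm a (hθ.refl a)))
    have hlow : lowerCover q ≤ m := le_of_forall_supIrred_le fun r hr hrq =>
      ih r (hrq.trans_lt hq.lowerCover_lt) hr ((hrq.trans lowerCover_le).trans hqb)
    have hmq : θ m (m ⊔ q) := by
      simpa [sup_eq_left.mpr hlow] using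
        hθ.sup (hθ.refl m) (hθ.symm (hθ.rel_lowerCover hq hq_resp))
    exact hqm (le_sup_right.trans (hm _ (hθ.trans ham hmq)))
  exact hθ.rel_of_le_of_le ham le_sup_left
    (sup_le (hm a (hθ.refl a)) (le_of_forall_supIrred_le key))

theorem IsCongruence.rel_of_agree (hθ : IsCongruence θ) (h : agree (respecting θ) a b) :
    θ a b := by
  have hba := hθ.rel_sup_of_agree fun P hP => (h P hP).symm
  rw [sup_comm] at hba
  exact hθ.trans (hθ.rel_sup_of_agree h) (hθ.symm hba)

theorem IsCongruence.exists_isPrimeFilter_notMem_respecting (hθ : IsCongruence θ)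
    (hne : θ ≠ fun a b => a = b) : ∃ P, IsPrimeFilter P ∧ P ∉ respecting θ := by
  obtain ⟨a, b, hab, hab'⟩ : ∃ a b, θ a b ∧ a ≠ b := by
    by_contra! h
    exact hne (funext₂ fun a b => propext ⟨h a b, fun e => e ▸ hθ.refl a⟩)
  by_contra! h
  exact hab' (eq_of_forall_isPrimeFilter fun P hP => (h P hP).2 a b hab)

theorem subdirectlyIrreducible_of_respecting_subset (hA : IsAdmissible A) (hP : IsPrimeFilter P)
    (hPA : P ∉ A)
    (h : ∀ θ, IsCongruence θ → (θ ≠ fun a b => a = b) → respecting θ ⊆ A) :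
    SubdirectlyIrreducible L :=
  ⟨agree A, hA.isCongruence_agree, agree_ne_eq hA.isPrimeFilter hP hPA,
    fun θ hθ hne _ _ hab => hθ.rel_of_agree fun Q hQ => hab Q (h θ hθ hne hQ)⟩

theorem SubdirectlyIrreducible.forall_mem_or_forall_mem (hSI : SubdirectlyIrreducible L)
    {B : Set (Set L)} (hA : IsAdmissible A) (hB : IsAdmissible B)
    (hAB : ∀ P, IsPrimeFilter P → P ∈ A ∨ P ∈ B) :
    (∀ P, IsPrimeFilter P → P ∈ A) ∨ ∀ P, IsPrimeFilter P → P ∈ B := by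
  by_contra! ⟨⟨P, hP, hPA⟩, ⟨Q, hQ, hQB⟩⟩
  obtain ⟨μ, hμ, hμne, hμle⟩ := hSI
  obtain ⟨R, hR, hRμ⟩ := hμ.exists_isPrimeFilter_notMem_respecting hμne
  refine hRμ ⟨hR, fun a b hab => ?_⟩
  rcases hAB R hR with hRA | hRB
  · exact hμle _ hA.isCongruence_agree (agree_ne_eq hA.isPrimeFilter hP hPA) a b hab R hRA
  · exact hμle _ hB.isCongruence_agree (agree_ne_eq hB.isPrimeFilter hQ hQB) a b hab R hRB

theorem SubdirectlyIrreducible.phiConnected (hSI : SubdirectlyIrreducible L) :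
    PhiConnected L := by
  intro S hS ⟨P, hPS⟩ hup hdown hphi
  have hSadm : IsAdmissible S := ⟨hS, hphi, fun Q hQ M hM hQM => hup Q M hQ hM.1 hQM⟩
  have hcompl : IsAdmissible ({Q | IsPrimeFilter Q} \ S) :=
    ⟨fun Q hQ => hQ.1, fun Q hQ => ⟨hQ.1.phi, fun h => hQ.2 (phi_phi Q ▸ hphi _ h)⟩,
      fun Q hQ M hM hQM => ⟨hM.1, fun h => hQ.2 (hdown M Q h hQ.1 hQM)⟩⟩
  rcases hSI.forall_mem_or_forall_mem hSadm hcompl fun Q hQ => (em (Q ∈ S)).imp id (⟨hQ, ·⟩)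
    with h | h
  · exact hS.antisymm h
  · exact absurd hPS (h P (hS hPS)).2

theorem SubdirectlyIrreducible.body_subset_pair (hSI : SubdirectlyIrreducible L)
    (hP : P ∈ body L) : body L ⊆ {P, phi P} := by
  intro Q hQ
  by_contra hQP
  have hcover : ∀ R, IsPrimeFilter R →
      R ∈ {R | IsPrimeFilter R} \ {P, phi P} ∨ R ∈ {R | IsPrimeFilter R} \ {Q, phi Q} := by
    intro R hR
    by_cases hRP : R ∈ ({P, phi P} : Set (Set L))
    · refine .inr ⟨hR, fun hRQ => hQP ?_⟩
      rw [← pair_phi_eq_of_mem hRP, pair_phi_eq_of_mem hRQ]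
      exact .inl rfl
    · exact .inl ⟨hR, hRP⟩
  rcases hSI.forall_mem_or_forall_mem (isAdmissible_diff_pair hP) (isAdmissible_diff_pair hQ)
    hcover with h | h
  · exact (h P hP.1).2 (.inl rfl)
  · exact (h Q hQ.1).2 (.inl rfl)

theorem PhiConnected.respecting_eq_empty (hcon : PhiConnected L) (hθ : IsCongruence θ)
    (hne : θ ≠ fun a b => a = b) (hbody : body L ⊆ respecting θ) :
    respecting θ = ∅ :=
  let ⟨_, hP, hPθ⟩ := hθ.exists_isPrimeFilter_notMem_respecting hne
  hcon.eq_empty_of_body_subset hθ.isAdmissible_respecting hbody hP hPθ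

theorem PhiConnected.respecting_subset_diff_pair (hcon : PhiConnected L)
    (hbody : body L ⊆ {P, phi P}) (hθ : IsCongruence θ) (hne : θ ≠ fun a b => a = b) :
    respecting θ ⊆ {Q | IsPrimeFilter Q} \ {P, phi P} := by
  intro Q hQ
  refine ⟨hQ.1, fun hQP => ?_⟩
  have hPθ : {P, phi P} ⊆ respecting θ := by
    rw [← pair_phi_eq_of_mem hQP]
    exact Set.insert_subset hQ
      (Set.singleton_subset_iff.mpr (hθ.isAdmissible_respecting.phi_mem Q hQ))
  rw [hcon.respecting_eq_empty hθ hne (hbody.trans hPθ)] at hQ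
  exact hQ

end Finite

theorem encard_body_lt_two_or_eq_pair_iff :
    ((body L).encard < 2 ∨ ∃ P, IsPrimeFilter P ∧ phi P ≠ P ∧ body L = {P, phi P}) ↔
      ∀ P ∈ body L, body L ⊆ {P, phi P} := by
  constructor
  · rintro (h | ⟨P₀, -, -, h⟩) P hP
    · have hsub := Set.encard_le_one_iff_subsingleton.mp (ENat.lt_two_iff.mp h)
      exact fun Q hQ => .inl (hsub hQ hP)
    · rw [h] at hP ⊢
      rw [pair_phi_eq_of_mem hP]
  · intro h
    rcases (body L).subsingleton_or_nontrivial with hs | ⟨P, hP, Q, hQ, hPQ⟩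
    · exact .inl (ENat.lt_two_iff.mpr (Set.encard_le_one_iff_subsingleton.mpr hs))
    · have hQ' : Q = phi P := (h P hP hQ).resolve_left hPQ.symm
      refine .inr ⟨P, hP.1, hQ' ▸ hPQ.symm, (h P hP).antisymm ?_⟩
      exact Set.insert_subset hP (Set.singleton_subset_iff.mpr (hQ' ▸ hQ))

end PMAlgebra

/-- A finite nontrivial pm-algebra is subdirectly irreducible iff its prime
filter space is φ-connected and its body has fewer than two elements or is of
the form `{P, φ(P)}` with `φ(P) ≠ P`. -/
theorem finite_subdirectlyIrreducible_iff {L : Type*} [PMAlgebra L] [Finite L]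
    (hnt : (⊥ : L) ≠ ⊤) :
    SubdirectlyIrreducible L ↔
      (PhiConnected L ∧ ((body L).encard < 2 ∨
        ∃ P : Set L, IsPrimeFilter P ∧ phi P ≠ P ∧ body L = {P, phi P})) := by
  rw [encard_body_lt_two_or_eq_pair_iff]
  refine ⟨fun hSI => ⟨hSI.phiConnected, fun P hP => hSI.body_subset_pair hP⟩, ?_⟩
  rintro ⟨hcon, hbody⟩
  rcases (body L).eq_empty_or_nonempty with hempty | ⟨P, hP⟩
  · obtain ⟨q, hq, -⟩ := exists_supIrred_le hnt.symm
    refine subdirectlyIrreducible_of_respecting_subset (A := ∅) ⟨by simp, by simp, by simp⟩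
      hq.isPrimeFilter_Ici (Set.notMem_empty _) fun θ hθ hne => ?_
    exact (hcon.respecting_eq_empty hθ hne (hempty ▸ Set.empty_subset _)).subset
  · exact subdirectlyIrreducible_of_respecting_subset (isAdmissible_diff_pair hP) hP.1 (by simp)
      fun θ hθ hne => hcon.respecting_subset_diff_pair (hbody P hP) hθ hne
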